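/- Let g be a nonempty list of positive natural numbers, M the additive submonoid of ℕ generated by g, and mgen_g n = sum over i in lgen_{|g|−1} n of g[i]. Then for every k ∈ ℕ and every x ∈ M with x < (length of lgen_{|g|−1} k) · (minimum of g), there exists n < k with mgen_g n = x. -/

import Mathlib

def next (m : ℕ) : List ℕ → List ℕ
  | [] => [0]
  | h :: t =>
    if h < m then (h + 1) :: t
    else
      match next m t with
      | [] => []
      | x :: t' => x :: x :: t'

def lgen (m : ℕ) : ℕ → List ℕ
  | 0 => []
  | n + 1 => next m (lgen m n)

def mgen (g : List ℕ) (n : ℕ) : ℕ :=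
  ((lgen (g.length - 1) n).map (fun i => g.getD i 0)).sum

/-!
`lgen m` enumerates the non-increasing lists with entries at most `m`, shortest first: `next`
is inverted on such lists by `prev`, which decreases the length or, at equal length, the value of
the list read as base-`(m + 1)` digits, so descending along `prev` from any such list reaches `[]`.
An element `x` of the monoid is a sum `∑ g[i]` over a non-increasing index list `l`, so
`x = mgen g n` where `lgen n = l`. If `n ≥ k`, then `l` is at least as long as `lgen k` and each
summand is at least `m`, contradicting `x < |lgen k| * m`.
-/

lemma next_ne_nil (m : ℕ) (l : List ℕ) : next m l ≠ [] := by
  induction l with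
  | nil => simp [next]
  | cons h t ih =>
    rw [next]
    split
    · simp
    · cases hnt : next m t with
      | nil => exact absurd hnt ih
      | cons x t' => simp

lemma length_le_length_next (m : ℕ) (l : List ℕ) : l.length ≤ (next m l).length := by
  induction l with
  | nil => simp [next]
  | cons h t ih =>
    rw [next]
    split
    · simp
    · cases hnt : next m t with
      | nil => exact absurd hnt (next_ne_nil m t)
      | cons x t' => simpa [hnt] using ih

lemma le_of_mem_next {m : ℕ} {l : List ℕ} (hle : ∀ a ∈ l, a ≤ m) : ∀ a ∈ next m l, a ≤ m := by
  induction l with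
  | nil => simp [next]
  | cons h t ih =>
    rw [next]
    split
    · simp only [List.mem_cons, forall_eq_or_imp] at hle ⊢
      exact ⟨by omega, hle.2⟩
    · have ih := ih fun a ha => hle a (List.mem_cons_of_mem _ ha)
      cases hnt : next m t with
      | nil => simp
      | cons x t' =>
        simp only [hnt, List.mem_cons, forall_eq_or_imp] at ih ⊢
        exact ⟨ih.1, ih.1, ih.2⟩

lemma le_of_mem_lgen {m : ℕ} (n : ℕ) : ∀ a ∈ lgen m n, a ≤ m := by
  induction n with
  | zero => simp [lgen]
  | succ n ih => exact le_of_mem_next ih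

lemma monotone_length_lgen (m : ℕ) : Monotone fun n => (lgen m n).length :=
  monotone_nat_of_le_succ fun n => length_le_length_next m (lgen m n)

/-- The inverse of `next` on nonempty non-increasing lists with entries at most `m`. -/
def prev (m : ℕ) : List ℕ → List ℕ
  | [] => []
  | [a] => if a = 0 then [] else [a - 1]
  | a :: b :: t => if b < a then (a - 1) :: b :: t else m :: prev m (a :: t)

section prev

variable {m : ℕ}

lemma length_prev_le (l : List ℕ) : (prev m l).length ≤ l.length := by
  fun_induction prev m l <;> grind

lemma le_of_mem_prev {l : List ℕ} (hle : ∀ a ∈ l, a ≤ m) : ∀ a ∈ prev m l, a ≤ m := by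
  fun_induction prev m l <;> simp_all <;> omega

lemma pairwise_prev {l : List ℕ} (hs : l.Pairwise (· ≥ ·)) (hle : ∀ a ∈ l, a ≤ m) :
    (prev m l).Pairwise (· ≥ ·) := by
  fun_induction prev m l with
  | case4 a b t h =>
    simp only [List.pairwise_cons, List.mem_cons] at hs ⊢
    grind
  | case5 a b t h ih =>
    have hs' : (a :: t).Pairwise (· ≥ ·) := hs.sublist (by simp)
    have hle' : ∀ c ∈ a :: t, c ≤ m := fun c hc => hle c (by grind)
    exact List.pairwise_cons.2 ⟨le_of_mem_prev hle', ih hs' hle'⟩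
  | _ => simp

lemma ofDigits_prev_lt {l : List ℕ} (hs : l.Pairwise (· ≥ ·)) (hne : l ≠ [])
    (hlen : (prev m l).length = l.length) :
    Nat.ofDigits (m + 1) (prev m l) < Nat.ofDigits (m + 1) l := by
  fun_induction prev m l with
  | case5 a b t h ih =>
    have hba : b = a := by grind
    subst hba
    have ih := ih (hs.sublist (by simp)) (by simp) (by simpa using hlen)
    simp only [Nat.ofDigits_cons] at ih ⊢
    nlinarith
  | _ => simp_all [Nat.ofDigits_cons] <;> omega

lemma next_prev {l : List ℕ} (hs : l.Pairwise (· ≥ ·)) (hle : ∀ a ∈ l, a ≤ m) (hne : l ≠ []) :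
    next m (prev m l) = l := by
  fun_induction prev m l with
  | case1 => contradiction
  | case2 => rfl
  | case3 a h =>
    have : a ≤ m := hle a (by simp)
    rw [next, if_pos (by omega)]
    congr 1; omega
  | case4 a b t h =>
    have : a ≤ m := hle a (by simp)
    rw [next, if_pos (by omega)]
    congr 1; omega
  | case5 a b t h ih =>
    have hba : b = a := by grind
    subst hba
    rw [next, if_neg (lt_irrefl m),
      ih (hs.sublist (by simp)) (fun c hc => hle c (by grind)) (by simp)]

end prev

theorem exists_lgen_eq {m : ℕ} {l : List ℕ} (hs : l.Pairwise (· ≥ ·)) (hle : ∀ a ∈ l, a ≤ m) :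
    ∃ n, lgen m n = l := by
  rcases eq_or_ne l [] with rfl | hne
  · exact ⟨0, rfl⟩
  obtain ⟨n, hn⟩ := exists_lgen_eq (pairwise_prev hs hle) (le_of_mem_prev hle)
  exact ⟨n + 1, by rw [lgen, hn, next_prev hs hle hne]⟩
termination_by (l.length, Nat.ofDigits (m + 1) l)
decreasing_by
  rcases (length_prev_le l).lt_or_eq with hlt | heq
  · exact Prod.Lex.left _ _ hlt
  · rw [heq]; exact Prod.Lex.right _ (ofDigits_prev_lt hs hne heq)

lemma exists_pairwise_sum_eq_of_mem_closure {g : List ℕ} {x : ℕ}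
    (hx : x ∈ AddSubmonoid.closure {y : ℕ | y ∈ g}) :
    ∃ l : List ℕ, l.Pairwise (· ≥ ·) ∧ (∀ i ∈ l, i < g.length) ∧
      (l.map fun i => g.getD i 0).sum = x := by
  obtain ⟨l, hlg, rfl⟩ := AddSubmonoid.exists_list_of_mem_closure hx
  have hperm := List.perm_insertionSort (· ≥ ·) (l.map g.idxOf)
  refine ⟨_, List.pairwise_insertionSort _ (l.map g.idxOf), fun i hi => ?_, ?_⟩
  · obtain ⟨y, hy, rfl⟩ := List.mem_map.1 (hperm.mem_iff.1 hi)
    exact List.idxOf_lt_length_of_mem (hlg y hy)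
  · rw [(hperm.map _).sum_eq, List.map_map]
    congr 1
    refine (List.map_congr_left fun y hy => ?_).trans (List.map_id l)
    simp only [Function.comp_apply, id]
    rw [List.getD_eq_getElem _ _ (List.idxOf_lt_length_of_mem (hlg y hy)), List.getElem_idxOf]

lemma exists_mgen_eq_of_mem_closure {g : List ℕ} {x : ℕ}
    (hx : x ∈ AddSubmonoid.closure {y : ℕ | y ∈ g}) : ∃ n, mgen g n = x := by
  obtain ⟨l, hs, hlt, hsum⟩ := exists_pairwise_sum_eq_of_mem_closure hx
  obtain ⟨n, hn⟩ := exists_lgen_eq hs fun i hi => Nat.le_sub_one_of_lt (hlt i hi)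
  exact ⟨n, by rw [mgen, hn, hsum]⟩

lemma length_lgen_mul_le_mgen {g : List ℕ} (hne : g ≠ []) {m : ℕ} (hmin : ∀ x ∈ g, m ≤ x)
    (n : ℕ) :
    (lgen (g.length - 1) n).length * m ≤ mgen g n := by
  have hg : 0 < g.length := List.length_pos_iff.2 hne
  rw [mgen, ← smul_eq_mul, ← List.length_map (f := fun i => g.getD i 0)]
  refine List.card_nsmul_le_sum _ _ fun y hy => ?_
  obtain ⟨i, hi, rfl⟩ := List.mem_map.1 hy
  have hi_le := le_of_mem_lgen n i hi
  rw [List.getD_eq_getElem _ _ (by omega)]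
  exact hmin _ (List.getElem_mem _)

theorem stmt_18_general (g : List ℕ) (hne : g ≠ []) (m : ℕ) (hmin : ∀ x ∈ g, m ≤ x)
    (k x : ℕ) (hx : x ∈ AddSubmonoid.closure {y : ℕ | y ∈ g})
    (hlt : x < (lgen (g.length - 1) k).length * m) :
    ∃ n < k, mgen g n = x := by
  obtain ⟨n, rfl⟩ := exists_mgen_eq_of_mem_closure hx
  refine ⟨n, lt_of_not_ge fun hkn => hlt.not_ge ?_, rfl⟩
  calc (lgen (g.length - 1) k).length * m
      ≤ (lgen (g.length - 1) n).length * m := Nat.mul_le_mul_right _ (monotone_length_lgen _ hkn)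
    _ ≤ mgen g n := length_lgen_mul_le_mgen hne hmin n

theorem stmt_18 (g : List ℕ) (hne : g ≠ []) (hpos : ∀ x ∈ g, 0 < x)
    (m : ℕ) (hm : m ∈ g) (hmin : ∀ x ∈ g, m ≤ x)
    (k x : ℕ) (hx : x ∈ AddSubmonoid.closure {y : ℕ | y ∈ g})
    (hlt : x < (lgen (g.length - 1) k).length * m) :
    ∃ n < k, mgen g n = x :=
  stmt_18_general g hne m hmin k x hx hlt
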